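/- Let ℏ > 0, p ∈ ℤ and q a positive integer. For j = 0, …, q−1 define the Gauss-sum coefficients c_j = (1/q) Σ_{k=0}^{q−1} e^{2πi p k²/q} e^{−2πi j k/q}. Then for every x ∈ ℝ, Σ_{n∈ℤ} e^{2πi p n²/q} e^{−n² ℏ/2} e^{i n x} = Σ_{j=0}^{q−1} c_j · ( Σ_{n∈ℤ} e^{−n² ℏ/2} e^{i n (x + 2π j/q)} ). In other words, the state evolved under the free flow on the circle up to the fractional-revival time t_{p/q} = (p/q)(2π/ℏ) is a superposition of q translates of the initial periodized coherent state ψ₀ located at the q equally spaced points 2πj/q: a quantum ubiquity phenomenon with no classical counterpart. -/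

import Mathlib

/-!
The phase `n ↦ e^{2πi p n²/q}` depends only on `n mod q`, so it is a function on `ZMod q`
and discrete Fourier inversion writes it as `Σ_{j<q} c_j e^{2πi n j/q}` with the Gauss-sum
coefficients `c_j`. Multiplying the `n`-th coefficient of `ψ₀` by `e^{2πi n j/q}` translates
`ψ₀` by `2πj/q`, and the finite sum over `j` may be pulled out of the series because the
Gaussian weights make every translate absolutely summable (it is a Jacobi theta series).
-/

open Complex Finset

namespace ZMod

variable {N : ℕ} [NeZero N]

lemma sum_range_natCast {M : Type*} [AddCommMonoid M] (f : ZMod N → M) :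
    ∑ k ∈ range N, f k = ∑ k, f k :=
  sum_nbij' (↑) val (by simp) (by simp [val_lt])
    (fun k hk => val_cast_of_lt (mem_range.1 hk)) (fun k _ => natCast_zmod_val k) (fun _ _ => rfl)

lemma apply_intCast_eq_sum_range (Φ : ZMod N → ℂ) (n : ℤ) :
    Φ n = ∑ j ∈ range N, (1 / N * ∑ k ∈ range N, Φ k * cexp (-(2 * Real.pi * I * j * k / N))) *
      cexp (2 * Real.pi * I * n * j / N) := by
  have inversion := congrFun (dft.symm_apply_apply Φ) n
  simp only [invDFT_apply, dft_apply, smul_eq_mul, ← sum_range_natCast] at inversion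
  rw [← inversion, mul_sum]
  refine sum_congr rfl fun j _ => ?_
  simp only [mul_sum, sum_mul]
  refine sum_congr rfl fun k _ => ?_
  rw [← Int.cast_natCast j, ← Int.cast_natCast k, ← Int.cast_mul, ← Int.cast_mul, ← Int.cast_neg,
    stdAddChar_coe, stdAddChar_coe]
  push_cast
  ring_nf

end ZMod

lemma cexp_two_pi_I_mul_sq_div_eq_sum_range {N : ℕ} [NeZero N] (p n : ℤ) :
    cexp (2 * Real.pi * I * p * n ^ 2 / N) =
      ∑ j ∈ range N, (1 / N * ∑ k ∈ range N, cexp (2 * Real.pi * I * p * k ^ 2 / N) *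
        cexp (-(2 * Real.pi * I * j * k / N))) * cexp (2 * Real.pi * I * n * j / N) := by
  have phase (m : ℤ) :
      ZMod.stdAddChar ((p : ZMod N) * (m : ZMod N) ^ 2) =
        cexp (2 * Real.pi * I * p * m ^ 2 / N) := by
    rw [← Int.cast_pow, ← Int.cast_mul, ZMod.stdAddChar_coe]
    push_cast
    ring_nf
  have phase_natCast (k : ℕ) :
      ZMod.stdAddChar ((p : ZMod N) * (k : ZMod N) ^ 2) =
        cexp (2 * Real.pi * I * p * k ^ 2 / N) := by
    simpa using phase k
  have expansion := ZMod.apply_intCast_eq_sum_range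
    (fun k : ZMod N => ZMod.stdAddChar ((p : ZMod N) * k ^ 2)) n
  rw [phase] at expansion
  simpa only [phase_natCast] using expansion

open Real in
lemma ofReal_exp_mul_cexp_eq_jacobiTheta₂_term (ℏ : ℝ) (y : ℂ) (n : ℤ) :
    (rexp (-(n : ℝ) ^ 2 * ℏ / 2) : ℂ) * cexp (I * n * y) =
      jacobiTheta₂_term n (y / (2 * π)) (I * ℏ / (2 * π)) := by
  have hπ : (π : ℂ) ≠ 0 := ofReal_ne_zero.mpr pi_ne_zero
  rw [jacobiTheta₂_term, ofReal_exp, ← Complex.exp_add]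
  congr 1
  field_simp
  push_cast
  ring_nf
  rw [I_sq]
  ring

lemma summable_ofReal_exp_mul_cexp {ℏ : ℝ} (hℏ : 0 < ℏ) (y : ℂ) :
    Summable fun n : ℤ => (Real.exp (-(n : ℝ) ^ 2 * ℏ / 2) : ℂ) * cexp (I * n * y) := by
  simp only [ofReal_exp_mul_cexp_eq_jacobiTheta₂_term, summable_jacobiTheta₂_term_iff]
  simp [div_im, hℏ, Real.pi_pos]

/-- Fractional revival / quantum ubiquity on the circle: at time `t_{p/q} = (p/q)(2π/ℏ)`
the free evolution of the periodized Gaussian coherent state is a superposition of `q`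
translates at the equally spaced points `2πj/q`, with Gauss-sum coefficients
`c_j = (1/q) Σ_{k<q} e^{2πi p k²/q} e^{−2πi j k/q}`. -/
theorem fractional_revival_gauss_sums
    (ℏ : ℝ) (hℏ : 0 < ℏ) (p : ℤ) (q : ℕ) (hq : 0 < q) (c : ℕ → ℂ)
    (hc : ∀ j : ℕ, c j = (1 / (q : ℂ)) *
      ∑ k ∈ Finset.range q,
        Complex.exp (2 * Real.pi * I * (p : ℂ) * (k : ℂ) ^ 2 / (q : ℂ)) *
          Complex.exp (-(2 * Real.pi * I * (j : ℂ) * (k : ℂ) / (q : ℂ)))) :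
    ∀ x : ℝ,
      (∑' n : ℤ, Complex.exp (2 * Real.pi * I * (p : ℂ) * (n : ℂ) ^ 2 / (q : ℂ)) *
          (Real.exp (-(n : ℝ) ^ 2 * ℏ / 2) : ℂ) * Complex.exp (I * (n : ℂ) * x)) =
        ∑ j ∈ Finset.range q, c j *
          ∑' n : ℤ, (Real.exp (-(n : ℝ) ^ 2 * ℏ / 2) : ℂ) *
            Complex.exp (I * (n : ℂ) * ((x : ℂ) + 2 * Real.pi * (j : ℂ) / (q : ℂ))) := by
  intro x
  have : NeZero q := ⟨hq.ne'⟩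
  have expand (n : ℤ) :
      cexp (2 * Real.pi * I * p * n ^ 2 / q) * (Real.exp (-(n : ℝ) ^ 2 * ℏ / 2) : ℂ) *
          cexp (I * n * x) =
        ∑ j ∈ range q, c j * ((Real.exp (-(n : ℝ) ^ 2 * ℏ / 2) : ℂ) *
          cexp (I * n * (x + 2 * Real.pi * j / q))) := by
    simp only [cexp_two_pi_I_mul_sq_div_eq_sum_range, ← hc, sum_mul]
    refine sum_congr rfl fun j _ => ?_
    rw [mul_add, Complex.exp_add]
    ring_nf
  rw [tsum_congr expand, Summable.tsum_finsetSum fun j _ =>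
    (summable_ofReal_exp_mul_cexp hℏ _).mul_left (c j)]
  exact sum_congr rfl fun j _ => tsum_mul_left
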